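/- Let Ψ = (G, ψ) be a connected signed graph. Then the largest eigenvalue of A(Ψ) equals the largest eigenvalue of A(G) if and only if Ψ is balanced. (Stanić's spectral criterion.) -/

import Mathlib

/-!
If every cycle has gain `1`, then so does every closed walk, so the gains of walks to a fixed
root form a switching function `θ` with `φ i j = θ i / θ j` on edges; then
`A(Φ) = D A(G) D⁻¹` for `D = diag θ`, and the two spectra coincide.

Conversely, let `x` be an eigenvector of `A(Φ)` for `λ = λ₁(A(Φ)) = λ₁(A(G))`. Then
`λ ‖x‖² = x* A(Φ) x ≤ |x|ᵀ A(G) |x| ≤ λ ‖x‖²`, so both inequalities are equalities: `|x|` is a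
`λ`-eigenvector of `A(G)`, hence nowhere zero because `G` is connected, and
`conj (x i) * φ i j * x j = |x i| |x j|` on every edge. Thus `θ = x / |x|` switches `φ` to the
trivial gain, and every closed walk has gain `1`.
-/

open Matrix
open scoped Classical

noncomputable section

namespace GG

variable {V : Type*}

/-- The gain of a walk: product of the gains of its oriented edges. -/
def walkGain {G : SimpleGraph V} (φ : V → V → ℂ) {u v : V} (p : G.Walk u v) : ℂ :=
  (p.darts.map (fun d => φ d.toProd.1 d.toProd.2)).prod

/-- `φ` is a `𝕋`-gain function on `G`: unit modulus on edges, inverse under reversal. -/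
def IsGain (G : SimpleGraph V) (φ : V → V → ℂ) : Prop :=
  (∀ i j, G.Adj i j → ‖φ i j‖ = 1) ∧ (∀ i j, G.Adj i j → φ j i = (φ i j)⁻¹)

/-- Adjacency matrix of a gain graph. -/
def gainAdj [Fintype V] [DecidableEq V] (G : SimpleGraph V) (φ : V → V → ℂ) :
    Matrix V V ℂ := fun i j => if G.Adj i j then φ i j else 0

/-- A gain graph is balanced if every cycle has gain 1. -/
def GBalanced (G : SimpleGraph V) (φ : V → V → ℂ) : Prop :=
  ∀ (u : V) (c : G.Walk u u), c.IsCycle → walkGain φ c = 1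

/-- All shortest paths between any pair of vertices have the same gain. -/
def DistCompatible (G : SimpleGraph V) (φ : V → V → ℂ) : Prop :=
  ∀ (s t : V) (p q : G.Walk s t), p.length = G.dist s t → q.length = G.dist s t →
    walkGain φ p = walkGain φ q

/-- The set of gains of shortest `s`-`t` paths. -/
def shortestGains (G : SimpleGraph V) (φ : V → V → ℂ) (s t : V) : Set ℂ :=
  {z | ∃ p : G.Walk s t, p.length = G.dist s t ∧ walkGain φ p = z}

/-- The element of `S` maximizing the real part, ties broken by maximal imaginary part
(correct for finite nonempty sets of gains). -/
def lexMaxGain (S : Set ℂ) : ℂ :=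
  ⟨sSup (Complex.re '' S), sSup (Complex.im '' {z ∈ S | z.re = sSup (Complex.re '' S)})⟩

/-- The element of `S` minimizing the real part, ties broken by minimal imaginary part. -/
def lexMinGain (S : Set ℂ) : ℂ :=
  ⟨sInf (Complex.re '' S), sInf (Complex.im '' {z ∈ S | z.re = sInf (Complex.re '' S)})⟩

/-- The maximum gain distance matrix `D^max_<(Φ)` with respect to a strict order `lt`. -/
def Dmax [Fintype V] [DecidableEq V] (G : SimpleGraph V) (φ : V → V → ℂ)
    (lt : V → V → Prop) : Matrix V V ℂ := fun s t =>
  if lt s t then lexMaxGain (shortestGains G φ s t) * (G.dist s t : ℂ)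
  else if lt t s then (starRingEnd ℂ) (lexMaxGain (shortestGains G φ t s)) * (G.dist s t : ℂ)
  else 0

/-- The minimum gain distance matrix `D^min_<(Φ)` with respect to a strict order `lt`. -/
def Dmin [Fintype V] [DecidableEq V] (G : SimpleGraph V) (φ : V → V → ℂ)
    (lt : V → V → Prop) : Matrix V V ℂ := fun s t =>
  if lt s t then lexMinGain (shortestGains G φ s t) * (G.dist s t : ℂ)
  else if lt t s then (starRingEnd ℂ) (lexMinGain (shortestGains G φ t s)) * (G.dist s t : ℂ)
  else 0

/-- Vertex order independence: the gain distance matrices agree for the standard order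
and its reverse. -/
def OrderIndependent [Fintype V] [DecidableEq V] [LinearOrder V] (G : SimpleGraph V)
    (φ : V → V → ℂ) : Prop :=
  Dmax G φ (· < ·) = Dmax G φ (fun a b => b < a) ∧
  Dmin G φ (· < ·) = Dmin G φ (fun a b => b < a)

/-- The largest (real) eigenvalue of a matrix. -/
def maxEig [Fintype V] [DecidableEq V] (A : Matrix V V ℂ) : ℝ :=
  sSup {r : ℝ | (r : ℂ) ∈ spectrum ℂ A}

/-- The spectral radius of a matrix. -/
def specRad [Fintype V] [DecidableEq V] (A : Matrix V V ℂ) : ℝ :=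
  sSup {r : ℝ | ∃ z ∈ spectrum ℂ A, ‖z‖ = r}

/-- The distance matrix of the underlying graph, as a complex matrix. -/
def distMatrix [Fintype V] [DecidableEq V] (G : SimpleGraph V) : Matrix V V ℂ :=
  fun i j => (G.dist i j : ℂ)

/-- Weighted gain adjacency matrix `A(Φ_w)`. -/
def wGainAdj [Fintype V] [DecidableEq V] (G : SimpleGraph V) (φ : V → V → ℂ)
    (w : V → V → ℝ) : Matrix V V ℂ := fun i j => if G.Adj i j then φ i j * (w i j : ℂ) else 0

/-- Weighted adjacency matrix `A(G_w)` of the underlying weighted graph. -/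
def wAdj [Fintype V] [DecidableEq V] (G : SimpleGraph V) (w : V → V → ℝ) :
    Matrix V V ℂ := fun i j => if G.Adj i j then (w i j : ℂ) else 0

section Walks

variable {G : SimpleGraph V} {φ : V → V → ℂ}

@[simp]
lemma walkGain_nil {u : V} : walkGain φ (SimpleGraph.Walk.nil : G.Walk u u) = 1 := rfl

@[simp]
lemma walkGain_cons {u v w : V} (h : G.Adj u v) (p : G.Walk v w) :
    walkGain φ (.cons h p) = φ u v * walkGain φ p := rfl

@[simp]
lemma walkGain_append {u v w : V} (p : G.Walk u v) (q : G.Walk v w) :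
    walkGain φ (p.append q) = walkGain φ p * walkGain φ q := by
  simp [walkGain, SimpleGraph.Walk.darts_append]

def IsSwitchingTrivial (G : SimpleGraph V) (φ : V → V → ℂ) : Prop :=
  ∃ θ : V → ℂˣ, ∀ i j, G.Adj i j → φ i j = ↑(θ i / θ j)

lemma walkGain_eq_of_isSwitchingTrivial {θ : V → ℂˣ}
    (hθ : ∀ i j, G.Adj i j → φ i j = ↑(θ i / θ j)) {u v : V} (p : G.Walk u v) :
    walkGain φ p = ↑(θ u / θ v) := by
  induction p with
  | nil => simp
  | cons h p ih => rw [walkGain_cons, hθ _ _ h, ih, ← Units.val_mul, div_mul_div_cancel]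

lemma IsSwitchingTrivial.gBalanced (h : IsSwitchingTrivial G φ) : GBalanced G φ := by
  obtain ⟨θ, hθ⟩ := h
  intro u c _
  simp [walkGain_eq_of_isSwitchingTrivial hθ c]

-- A closed walk that repeats a vertex splits there into two shorter closed walks; one that does
-- not is a cycle or an edge traversed back and forth.
lemma walkGain_eq_one_of_gBalanced (hinv : ∀ i j, G.Adj i j → φ i j * φ j i = 1)
    (hbal : GBalanced G φ) {u : V} (c : G.Walk u u) : walkGain φ c = 1 := by
  induction hn : c.length using Nat.strong_induction_on generalizing u with | _ n ih =>
  cases c with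
  | nil => rfl
  | @cons _ v _ h q =>
    by_cases hq : q.IsPath
    · by_cases he : s(u, v) ∈ q.edges
      · rw [hq.eq_adj_toWalk_of_mem_edges (Sym2.eq_swap ▸ he)]
        simpa using hinv u v h
      · exact hbal u _ ((SimpleGraph.Walk.cons_isCycle_iff q h).mpr ⟨hq, he⟩)
    · obtain ⟨w, l, ⟨ru, rv, rfl⟩, hnil⟩ : ∃ (w : V) (l : G.Walk w w), l.IsSubwalk q ∧ ¬ l.Nil := by
        simpa [SimpleGraph.Walk.isPath_iff_isSubwalk_imp_nil] using hq
      have hl : 0 < l.length := SimpleGraph.Walk.not_nil_iff_lt_length.mp hnil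
      simp only [SimpleGraph.Walk.length_cons, SimpleGraph.Walk.length_append] at hn
      have h₁ := ih (ru.length + rv.length + 1) (by omega) (.cons h (ru.append rv)) (by simp)
      have h₂ := ih _ (by omega) l rfl
      simp only [walkGain_cons, walkGain_append] at h₁ ⊢
      linear_combination (walkGain φ l) * h₁ + h₂

lemma isSwitchingTrivial_of_gBalanced (hconn : G.Connected)
    (hinv : ∀ i j, G.Adj i j → φ i j * φ j i = 1) (hbal : GBalanced G φ) :
    IsSwitchingTrivial G φ := by
  obtain ⟨r⟩ := hconn.nonempty
  let p (v : V) : G.Walk v r := (hconn.preconnected v r).some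
  have hloop {u : V} (c : G.Walk u u) := walkGain_eq_one_of_gBalanced hinv hbal c
  let θ (v : V) : ℂˣ := Units.mkOfMulEqOne _ (walkGain φ (p v).reverse) <| by
    simpa using hloop ((p v).append (p v).reverse)
  refine ⟨θ, fun i j h => ?_⟩
  have hij := hloop (.cons h ((p j).append (p i).reverse))
  have hi := hloop ((p i).append (p i).reverse)
  rw [eq_comm, Units.val_div_eq_div_val, div_eq_iff (θ j).ne_zero]
  simp only [walkGain_cons, walkGain_append, θ, Units.val_mkOfMulEqOne] at hij hi ⊢
  linear_combination φ i j * walkGain φ (p j) * hi - walkGain φ (p i) * hij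

lemma isSwitchingTrivial_of_star_mul_mul_eq {x : V → ℂ} (hx : ∀ i, x i ≠ 0)
    (h : ∀ i j, G.Adj i j → star (x i) * φ i j * x j = ((‖x i‖ * ‖x j‖ : ℝ) : ℂ)) :
    IsSwitchingTrivial G φ := by
  have hnorm (i : V) : (‖x i‖ : ℂ) ≠ 0 := by exact_mod_cast norm_ne_zero_iff.mpr (hx i)
  refine ⟨fun i => Units.mk0 (x i / ‖x i‖) (div_ne_zero (hx i) (hnorm i)), fun i j hij => ?_⟩
  have hij := h i j hij
  have hi : star (x i) * x i = ((‖x i‖ ^ 2 : ℝ) : ℂ) := by simp [Complex.conj_mul']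
  have hxj := hx j
  have hxi := hnorm i
  simp only [Units.val_div_eq_div_val, Units.val_mk0]
  field_simp
  push_cast at hij hi
  refine mul_left_cancel₀ hxi ?_
  linear_combination x i * hij - φ i j * x j * hi

lemma forall_of_adj_closed (hconn : G.Connected) {P : V → Prop}
    (hP : ∀ i j, G.Adj i j → P i → P j) {u : V} (hu : P u) (v : V) : P v := by
  have walk_closed {a b : V} (p : G.Walk a b) : P a → P b := by
    induction p with
    | nil => exact id
    | cons h _ ih => exact fun ha => ih (hP _ _ h ha)
  exact walk_closed (hconn.preconnected u v).some hu

lemma pos_of_sum_neighbor_eq [Fintype V] (hconn : G.Connected) {y : V → ℝ} (hy : 0 ≤ y)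
    (hy0 : y ≠ 0) {c : ℝ} (h : ∀ i, ∑ j ∈ G.neighborFinset i, y j = c * y i) (i : V) : 0 < y i := by
  refine (hy i).lt_of_ne fun hi => hy0 <| funext <|
    forall_of_adj_closed hconn (P := fun v => y v = 0) ?_ hi.symm
  intro a b hab ha
  have hsum : ∑ j ∈ G.neighborFinset a, y j = 0 := by rw [h, ha, mul_zero]
  exact (Finset.sum_eq_zero_iff_of_nonneg fun j _ => hy j).mp hsum b (by simpa using hab)

lemma IsGain.ne_zero (hφ : IsGain G φ) {i j : V} (h : G.Adj i j) : φ i j ≠ 0 :=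
  norm_ne_zero_iff.mp (by simp [hφ.1 i j h])

lemma IsGain.mul_symm_eq_one (hφ : IsGain G φ) {i j : V} (h : G.Adj i j) : φ i j * φ j i = 1 := by
  rw [hφ.2 i j h, mul_inv_cancel₀ (hφ.ne_zero h)]

lemma gainAdj_term_le (hφ : IsGain G φ) (x : V → ℂ) (i j : V) :
    (if G.Adj i j then (star (x i) * φ i j * x j).re else 0) ≤
      if G.Adj i j then ‖x i‖ * ‖x j‖ else 0 := by
  split_ifs with h
  · refine (Complex.re_le_norm _).trans_eq ?_
    simp [hφ.1 i j h]
  · rfl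

lemma isGain_of_sign {σ : V → V → ℝ} (hsgn : ∀ i j, G.Adj i j → σ i j = 1 ∨ σ i j = -1)
    (hsymm : ∀ i j, σ i j = σ j i) : IsGain G (fun i j => (σ i j : ℂ)) := by
  refine ⟨fun i j h => ?_, fun i j h => ?_⟩ <;> rcases hsgn i j h with hσ | hσ <;>
    simp [hσ, hsymm j i]

end Walks

lemma eq_of_sum_sum_le {ι κ M : Type*} [Fintype ι] [Fintype κ] [AddCommMonoid M] [PartialOrder M]
    [IsOrderedCancelAddMonoid M] {f g : ι → κ → M} (hle : ∀ i j, f i j ≤ g i j)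
    (h : ∑ i, ∑ j, g i j ≤ ∑ i, ∑ j, f i j) (i : ι) (j : κ) : f i j = g i j := by
  have hrow (i : ι) : ∑ j, f i j ≤ ∑ j, g i j := Finset.sum_le_sum fun j _ => hle i j
  have hsum := le_antisymm (Finset.sum_le_sum fun i _ => hrow i) h
  have hi := (Finset.sum_eq_sum_iff_of_le fun i _ => hrow i).mp hsum i (Finset.mem_univ i)
  exact (Finset.sum_eq_sum_iff_of_le fun j _ => hle i j).mp hi j (Finset.mem_univ j)

section Spectrum

variable [Fintype V] [DecidableEq V] {G : SimpleGraph V} {φ : V → V → ℂ}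

lemma IsSwitchingTrivial.spectrum_gainAdj (h : IsSwitchingTrivial G φ) :
    spectrum ℂ (gainAdj G φ) = spectrum ℂ (G.adjMatrix ℂ) := by
  obtain ⟨θ, hθ⟩ := h
  let D : (Matrix V V ℂ)ˣ :=
    ⟨diagonal (fun v => θ v), diagonal (fun v => (((θ v)⁻¹ : ℂˣ) : ℂ)), by simp, by simp⟩
  have hconj : gainAdj G φ =
      diagonal (fun v => (θ v : ℂ)) * G.adjMatrix ℂ * diagonal (fun v => (((θ v)⁻¹ : ℂˣ) : ℂ)) := by
    ext i j
    simp only [mul_diagonal, diagonal_mul, gainAdj, SimpleGraph.adjMatrix_apply]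
    split_ifs with hij
    · simp [hθ i j hij, div_eq_mul_inv]
    · simp
  rw [hconj]
  exact spectrum.units_conjugate (u := D)

lemma IsSwitchingTrivial.maxEig_gainAdj (h : IsSwitchingTrivial G φ) :
    maxEig (gainAdj G φ) = maxEig (G.adjMatrix ℂ) := by
  rw [maxEig, maxEig, h.spectrum_gainAdj]

end Spectrum

section Hermitian

open scoped ComplexOrder

variable [Fintype V] [DecidableEq V] {A : Matrix V V ℂ}

lemma maxEig_eq_sSup_spectrum_real (A : Matrix V V ℂ) : maxEig A = sSup (spectrum ℝ A) := by
  rw [maxEig]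
  congr 1

lemma le_maxEig {μ : ℝ} (hμ : μ ∈ spectrum ℝ A) : μ ≤ maxEig A := by
  rw [maxEig_eq_sSup_spectrum_real]
  exact le_csSup A.finite_real_spectrum.bddAbove hμ

lemma maxEig_mem_spectrum_real [Nonempty V] (hA : A.IsHermitian) : maxEig A ∈ spectrum ℝ A := by
  rw [maxEig_eq_sSup_spectrum_real]
  refine Set.Nonempty.csSup_mem ?_ A.finite_real_spectrum
  rw [hA.spectrum_real_eq_range_eigenvalues]
  exact Set.range_nonempty _

lemma exists_mulVec_eq_maxEig_smul [Nonempty V] (hA : A.IsHermitian) :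
    ∃ x ≠ 0, A *ᵥ x = (maxEig A : ℂ) • x := by
  have h := maxEig_mem_spectrum_real hA
  rw [hA.spectrum_real_eq_range_eigenvalues] at h
  obtain ⟨i, hi⟩ := h
  refine ⟨hA.eigenvectorBasis i, ?_, ?_⟩
  · exact fun h => (hA.eigenvectorBasis.orthonormal.ne_zero i) (by simpa using h)
  · rw [hA.mulVec_eigenvectorBasis, hi, Complex.coe_smul]

lemma posSemidef_maxEig_sub [Nonempty V] (hA : A.IsHermitian) :
    (algebraMap ℝ (Matrix V V ℂ) (maxEig A) - A).PosSemidef := by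
  have hB : (algebraMap ℝ (Matrix V V ℂ) (maxEig A) - A).IsHermitian := by
    rw [Algebra.algebraMap_eq_smul_one]
    exact (isHermitian_one.smul (IsSelfAdjoint.all _)).sub hA
  rw [hB.posSemidef_iff_eigenvalues_nonneg]
  intro i
  obtain ⟨_, rfl, μ, hμ, hi⟩ := (spectrum.singleton_sub_eq A (maxEig A)).symm ▸
    hB.eigenvalues_mem_spectrum_real i
  simp only [Pi.zero_apply, ← hi, sub_nonneg]
  exact le_maxEig hμ

lemma dotProduct_algebraMap_sub_mulVec (c : ℝ) (A : Matrix V V ℂ) (x : V → ℂ) :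
    star x ⬝ᵥ (algebraMap ℝ (Matrix V V ℂ) c - A) *ᵥ x = c • (star x ⬝ᵥ x) - star x ⬝ᵥ A *ᵥ x := by
  rw [sub_mulVec, dotProduct_sub, Algebra.algebraMap_eq_smul_one, smul_mulVec, one_mulVec,
    dotProduct_smul]

lemma re_dotProduct_mulVec_le_maxEig [Nonempty V] (hA : A.IsHermitian) (x : V → ℂ) :
    (star x ⬝ᵥ A *ᵥ x).re ≤ maxEig A * (star x ⬝ᵥ x).re := by
  have h := (posSemidef_maxEig_sub hA).re_dotProduct_nonneg x
  rw [dotProduct_algebraMap_sub_mulVec, RCLike.re_to_complex, Complex.sub_re,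
    Complex.smul_re, smul_eq_mul] at h
  linarith

lemma mulVec_eq_maxEig_smul_of_re_eq [Nonempty V] (hA : A.IsHermitian) {x : V → ℂ}
    (h : (star x ⬝ᵥ A *ᵥ x).re = maxEig A * (star x ⬝ᵥ x).re) :
    A *ᵥ x = (maxEig A : ℂ) • x := by
  have hB := posSemidef_maxEig_sub hA
  have h0 : star x ⬝ᵥ (algebraMap ℝ (Matrix V V ℂ) (maxEig A) - A) *ᵥ x = 0 := by
    refine Complex.ext ?_ (Complex.le_def.mp (hB.dotProduct_mulVec_nonneg x)).2.symm
    rw [dotProduct_algebraMap_sub_mulVec, Complex.sub_re, Complex.smul_re, smul_eq_mul, h,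
      Complex.zero_re, sub_self]
  have := (hB.dotProduct_mulVec_zero_iff x).mp h0
  rw [sub_mulVec, sub_eq_zero, Algebra.algebraMap_eq_smul_one, smul_mulVec, one_mulVec] at this
  rw [← this]
  exact (Complex.coe_smul _ _).symm

end Hermitian

section PerronFrobenius

variable [Fintype V] [DecidableEq V] {G : SimpleGraph V} {φ : V → V → ℂ}

lemma IsGain.isHermitian_gainAdj (hφ : IsGain G φ) : (gainAdj G φ).IsHermitian := by
  ext i j
  simp only [conjTranspose_apply, gainAdj, G.adj_comm j i]
  split_ifs with h
  · rw [hφ.2 i j h, RCLike.inv_eq_conj (hφ.1 i j h), Complex.star_def, Complex.conj_conj]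
  · simp

lemma gainAdj_one : gainAdj G (fun _ _ => 1) = G.adjMatrix ℂ := by
  ext i j
  simp [gainAdj, SimpleGraph.adjMatrix_apply]

lemma re_dotProduct_gainAdj_mulVec (x : V → ℂ) :
    (star x ⬝ᵥ gainAdj G φ *ᵥ x).re =
      ∑ i, ∑ j, if G.Adj i j then (star (x i) * φ i j * x j).re else 0 := by
  simp only [dotProduct, mulVec, Finset.mul_sum, Complex.re_sum, Pi.star_apply]
  refine Finset.sum_congr rfl fun i _ => Finset.sum_congr rfl fun j _ => ?_
  simp only [gainAdj]
  split_ifs <;> simp [mul_assoc]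

lemma re_dotProduct_adjMatrix_mulVec_norm (x : V → ℂ) :
    (star (fun i => (‖x i‖ : ℂ)) ⬝ᵥ G.adjMatrix ℂ *ᵥ fun i => (‖x i‖ : ℂ)).re =
      ∑ i, ∑ j, if G.Adj i j then ‖x i‖ * ‖x j‖ else 0 := by
  rw [← gainAdj_one, re_dotProduct_gainAdj_mulVec]
  simp

lemma re_dotProduct_gainAdj_mulVec_le (hφ : IsGain G φ) (x : V → ℂ) :
    (star x ⬝ᵥ gainAdj G φ *ᵥ x).re ≤
      (star (fun i => (‖x i‖ : ℂ)) ⬝ᵥ G.adjMatrix ℂ *ᵥ fun i => (‖x i‖ : ℂ)).re := by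
  rw [re_dotProduct_gainAdj_mulVec, re_dotProduct_adjMatrix_mulVec_norm]
  exact Finset.sum_le_sum fun i _ => Finset.sum_le_sum fun j _ => gainAdj_term_le hφ x i j

lemma star_mul_mul_eq_of_re_dotProduct_le (hφ : IsGain G φ) {x : V → ℂ}
    (h : (star (fun i => (‖x i‖ : ℂ)) ⬝ᵥ G.adjMatrix ℂ *ᵥ fun i => (‖x i‖ : ℂ)).re ≤
      (star x ⬝ᵥ gainAdj G φ *ᵥ x).re) {i j : V} (hij : G.Adj i j) :
    star (x i) * φ i j * x j = ((‖x i‖ * ‖x j‖ : ℝ) : ℂ) := by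
  rw [re_dotProduct_gainAdj_mulVec, re_dotProduct_adjMatrix_mulVec_norm] at h
  have hre := eq_of_sum_sum_le (gainAdj_term_le hφ x) h i j
  simp only [if_pos hij] at hre
  have hnorm : ‖star (x i) * φ i j * x j‖ = ‖x i‖ * ‖x j‖ := by simp [hφ.1 i j hij]
  have him := (Complex.nonneg_iff.mp (Complex.re_eq_norm.mp (hre.trans hnorm.symm))).2
  exact Complex.ext (by simpa using hre) (by simpa using him.symm)

lemma isSwitchingTrivial_of_maxEig_eq (hconn : G.Connected) (hφ : IsGain G φ)
    (h : maxEig (gainAdj G φ) = maxEig (G.adjMatrix ℂ)) : IsSwitchingTrivial G φ := by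
  have := hconn.nonempty
  obtain ⟨x, hx0, hx⟩ := exists_mulVec_eq_maxEig_smul hφ.isHermitian_gainAdj
  set y : V → ℂ := fun i => (‖x i‖ : ℂ)
  have hyy : star y ⬝ᵥ y = star x ⬝ᵥ x := by
    simp [y, dotProduct, Complex.conj_mul', sq]
  have hx_quad : (star x ⬝ᵥ gainAdj G φ *ᵥ x).re = maxEig (G.adjMatrix ℂ) * (star y ⬝ᵥ y).re := by
    rw [hx, h, hyy, dotProduct_smul, smul_eq_mul, Complex.re_ofReal_mul]
  have hray := re_dotProduct_mulVec_le_maxEig (G.isHermitian_adjMatrix ℂ) y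
  have hle := re_dotProduct_gainAdj_mulVec_le hφ x
  have hy := mulVec_eq_maxEig_smul_of_re_eq (G.isHermitian_adjMatrix ℂ) (by linarith)
  have hge : (star y ⬝ᵥ G.adjMatrix ℂ *ᵥ y).re ≤ (star x ⬝ᵥ gainAdj G φ *ᵥ x).re := by linarith
  have hpos : ∀ i, 0 < ‖x i‖ := by
    refine pos_of_sum_neighbor_eq hconn (fun i => norm_nonneg _) ?_ (c := maxEig (G.adjMatrix ℂ))
      fun i => ?_
    · exact fun h0 => hx0 (funext fun i => norm_eq_zero.mp (congrFun h0 i))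
    · have := congrFun hy i
      simp only [SimpleGraph.adjMatrix_mulVec_apply, y, Pi.smul_apply, smul_eq_mul] at this
      exact_mod_cast this
  exact isSwitchingTrivial_of_star_mul_mul_eq (fun i => norm_pos_iff.mp (hpos i))
    fun i j hij => star_mul_mul_eq_of_re_dotProduct_le hφ hge hij

theorem maxEig_gainAdj_eq_iff_gBalanced (hconn : G.Connected) (hφ : IsGain G φ) :
    maxEig (gainAdj G φ) = maxEig (G.adjMatrix ℂ) ↔ GBalanced G φ :=
  ⟨fun h => (isSwitchingTrivial_of_maxEig_eq hconn hφ h).gBalanced,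
    fun h =>
      (isSwitchingTrivial_of_gBalanced hconn (fun _ _ => hφ.mul_symm_eq_one) h).maxEig_gainAdj⟩

end PerronFrobenius

/-- Stanić's spectral criterion: the largest eigenvalues of a connected signed
graph and its underlying graph coincide iff the signed graph is balanced. -/
theorem stanic_criterion {V : Type*} [Fintype V] [DecidableEq V]
    (G : SimpleGraph V) (hconn : G.Connected) (σ : V → V → ℝ)
    (hsgn : ∀ i j, G.Adj i j → σ i j = 1 ∨ σ i j = -1) (hsymm : ∀ i j, σ i j = σ j i) :
    maxEig (gainAdj G (fun i j => (σ i j : ℂ))) = maxEig (G.adjMatrix ℂ) ↔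
      GBalanced G (fun i j => (σ i j : ℂ)) :=
  maxEig_gainAdj_eq_iff_gBalanced hconn (isGain_of_sign hsgn hsymm)

end GG
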